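/- For every m > 0, the inverse function r_m : [0, ∞) → [r₀(m), ∞) of s_m satisfies: r_m(0) = r₀(m); r_m is differentiable on (0, ∞) with r_m′(s) = √(1 + r_m(s)² − 2m/r_m(s)) > 0; r_m is twice differentiable on (0, ∞) with r_m″(s) = r_m(s) + m/r_m(s)²; and the one-sided derivative of r_m at s = 0 exists and equals 0. -/

import Mathlib

/-!
Write `V(r) = 1 + r² − 2m/r`, so that `s_m' = V^{-1/2}` and `V(r₀) = 0 < V` on `(r₀, ∞)`.
The inverse function theorem gives `r_m' = √(V ∘ r_m)` on `(0, ∞)`, and differentiating once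
more gives `r_m'' = V'(r_m)/2 = r_m + m/r_m²`. At `s = 0` the derivative `√(V(r_m(s)))` tends
to `√(V(r₀)) = 0`, and a function continuous at an endpoint whose derivative has a limit there
has that limit as its one-sided derivative.
-/

open MeasureTheory

/-- The arclength function `s_m(r) = ∫_{r₀}^{r} (1 + t² − 2m/t)^{−1/2} dt`, the
`g_m`-distance from the coordinate sphere `S_r` to the boundary sphere `S_{r₀}` in the
Schwarzschild anti-de Sitter space of mass `m`. -/
noncomputable def sm (m r₀ r : ℝ) : ℝ :=
  ∫ t in Set.Ioc r₀ r, (Real.sqrt (1 + t ^ 2 - 2 * m / t))⁻¹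

open Filter Topology Set

theorem StrictMonoOn.continuousOn_Ici_of_image_eq {α β : Type*} [LinearOrder α]
    [TopologicalSpace α] [OrderTopology α] [LinearOrder β] [TopologicalSpace β] [OrderTopology β]
    [DenselyOrdered β] {f : α → β} {a : α} {b : β} (hf : StrictMonoOn f (Ici a))
    (himage : f '' Ici a = Ici b) : ContinuousOn f (Ici a) := by
  have hfa : f a = b := by
    obtain ⟨c, hc, hfc⟩ : b ∈ f '' Ici a := himage ▸ self_mem_Ici
    exact le_antisymm (hfc ▸ hf.monotoneOn self_mem_Ici hc hc)
      (himage.subset (mem_image_of_mem f self_mem_Ici))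
  intro x hx
  rcases (mem_Ici.1 hx).eq_or_lt with rfl | hax
  · exact hf.continuousWithinAt_right_of_image_mem_nhdsWithin self_mem_nhdsWithin
      (by rw [himage, hfa]; exact self_mem_nhdsWithin)
  · refine (hf.continuousAt_of_image_mem_nhds (Ici_mem_nhds hax) ?_).continuousWithinAt
    exact himage ▸ Ici_mem_nhds (hfa ▸ hf self_mem_Ici hx hax)

theorem StrictMonoOn.strictMonoOn_of_leftInvOn {α β : Type*} [LinearOrder α] [Preorder β]
    {f : α → β} {g : β → α} {s : Set β} {t : Set α} (hf : StrictMonoOn f t) (hg : MapsTo g s t)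
    (hfg : LeftInvOn f g s) : StrictMonoOn g s :=
  fun _ hu _ hv huv => (hf.lt_iff_lt (hg hu) (hg hv)).1 (by rwa [hfg hu, hfg hv])

noncomputable def lapseSq (m r : ℝ) : ℝ := 1 + r ^ 2 - 2 * m / r

section lapseSq

variable {m r₀ : ℝ}

lemma lapseSq_eq_zero (hr₀ : r₀ ≠ 0) (hroot : r₀ ^ 3 + r₀ = 2 * m) : lapseSq m r₀ = 0 := by
  rw [lapseSq, ← hroot]
  field_simp
  ring

lemma lapseSq_pos (hr₀ : 0 < r₀) (hroot : r₀ ^ 3 + r₀ = 2 * m) {t : ℝ} (ht : r₀ < t) :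
    0 < lapseSq m t := by
  have ht₀ : 0 < t := hr₀.trans ht
  have hcube : r₀ ^ 3 < t ^ 3 := pow_lt_pow_left₀ ht hr₀.le three_ne_zero
  rw [lapseSq, sub_pos, div_lt_iff₀ ht₀]
  linarith

lemma hasDerivAt_lapseSq {r : ℝ} (hr : r ≠ 0) :
    HasDerivAt (lapseSq m) (2 * r + 2 * m / r ^ 2) r := by
  have h := ((hasDerivAt_pow 2 r).const_add 1).fun_sub ((hasDerivAt_inv hr).const_mul (2 * m))
  refine (h.congr_deriv ?_).congr_of_eventuallyEq (.of_eq (funext fun t => ?_))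
  · field_simp
    ring
  · simp [lapseSq, div_eq_mul_inv]

/-- A solution of `g' = √(V ∘ g)` satisfies `g'' = V'(g) / 2`. -/
lemma HasDerivAt.sqrt_lapseSq_comp {g : ℝ → ℝ} {s : ℝ}
    (hg : HasDerivAt g (√(lapseSq m (g s))) s) (hpos : 0 < lapseSq m (g s)) (hne : g s ≠ 0) :
    HasDerivAt (fun u => √(lapseSq m (g u))) (g s + m / g s ^ 2) s := by
  refine (((hasDerivAt_lapseSq hne).comp s hg).sqrt hpos.ne').congr_deriv ?_
  have : 0 < √(lapseSq m (g s)) := Real.sqrt_pos.2 hpos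
  simp only [Function.comp_apply]
  field_simp

lemma hasDerivWithinAt_Ici_of_deriv_eq_sqrt_lapseSq (hr₀ : r₀ ≠ 0)
    (hroot : r₀ ^ 3 + r₀ = 2 * m) {g : ℝ → ℝ} (hcont : ContinuousWithinAt g (Ioi 0) 0)
    (hg₀ : g 0 = r₀) (hg : ∀ s, 0 < s → HasDerivAt g (√(lapseSq m (g s))) s) :
    HasDerivWithinAt g 0 (Ici 0) 0 := by
  refine hasDerivWithinAt_Ici_of_tendsto_deriv
    (fun s hs => (hg s hs).differentiableAt.differentiableWithinAt) hcont self_mem_nhdsWithin ?_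
  have hderiv_eq : deriv g =ᶠ[𝓝[>] 0] fun u => √(lapseSq m (g u)) :=
    eventually_mem_nhdsWithin.mono fun u hu => (hg u hu).deriv
  refine Tendsto.congr' hderiv_eq.symm ?_
  simpa [hg₀, lapseSq_eq_zero hr₀ hroot] using
    ((hasDerivAt_lapseSq (m := m) hr₀).continuousAt.tendsto.comp (hg₀ ▸ hcont.tendsto)).sqrt

end lapseSq

section sm

variable {m r₀ : ℝ}

lemma sm_self : sm m r₀ r₀ = 0 := by
  simp [sm]

/-- The Bochner integral defining `sm` is `0` when the integrand is not integrable, so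
injectivity of `sm` forces integrability near the singular endpoint `r₀`. -/
lemma intervalIntegrable_of_injOn_sm (hinj : InjOn (sm m r₀) (Ici r₀)) {r : ℝ} (hr : r₀ ≤ r) :
    IntervalIntegrable (fun t => (√(lapseSq m t))⁻¹) volume r₀ r := by
  rw [intervalIntegrable_iff_integrableOn_Ioc_of_le hr]
  by_contra hint
  have hzero : sm m r₀ r = sm m r₀ r₀ := by
    rw [sm_self]
    exact integral_undef hint
  rcases hr.eq_or_lt with rfl | hlt
  · simp at hint
  · exact hlt.ne (hinj hr self_mem_Ici hzero).symm

lemma sm_eq_intervalIntegral {r : ℝ} (hr : r₀ ≤ r) :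
    sm m r₀ r = ∫ t in r₀..r, (√(lapseSq m t))⁻¹ :=
  (intervalIntegral.integral_of_le hr).symm

lemma sm_strictMonoOn (hr₀ : 0 < r₀) (hroot : r₀ ^ 3 + r₀ = 2 * m)
    (hinj : InjOn (sm m r₀) (Ici r₀)) : StrictMonoOn (sm m r₀) (Ici r₀) := by
  intro a ha b hb hab
  rw [← sub_pos, sm_eq_intervalIntegral hb, sm_eq_intervalIntegral ha,
    intervalIntegral.integral_interval_sub_left (intervalIntegrable_of_injOn_sm hinj hb)
      (intervalIntegrable_of_injOn_sm hinj ha)]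
  refine intervalIntegral.intervalIntegral_pos_of_pos_on ?_ (fun t ht => ?_) hab
  · exact (intervalIntegrable_of_injOn_sm hinj ha).symm.trans
      (intervalIntegrable_of_injOn_sm hinj hb)
  · exact inv_pos.2 (Real.sqrt_pos.2 (lapseSq_pos hr₀ hroot ((mem_Ici.1 ha).trans_lt ht.1)))

lemma hasDerivAt_sm (hr₀ : 0 < r₀) (hroot : r₀ ^ 3 + r₀ = 2 * m)
    (hinj : InjOn (sm m r₀) (Ici r₀)) {r : ℝ} (hr : r₀ < r) :
    HasDerivAt (sm m r₀) (√(lapseSq m r))⁻¹ r := by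
  have hcont : ContinuousAt (fun t => (√(lapseSq m t))⁻¹) r :=
    ((hasDerivAt_lapseSq (hr₀.trans hr).ne').continuousAt.sqrt).inv₀
      (Real.sqrt_pos.2 (lapseSq_pos hr₀ hroot hr)).ne'
  have hmeas : StronglyMeasurableAtFilter (fun t => (√(lapseSq m t))⁻¹) (𝓝 r) volume :=
    (Measurable.stronglyMeasurable (by unfold lapseSq; fun_prop)).stronglyMeasurableAtFilter
  refine (intervalIntegral.integral_hasDerivAt_right
    (intervalIntegrable_of_injOn_sm hinj hr.le) hmeas hcont).congr_of_eventuallyEq ?_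
  filter_upwards [eventually_gt_nhds hr] with u hu
  exact sm_eq_intervalIntegral hu.le

end sm

theorem penrose_stmt8_general (m r₀ : ℝ) (hr₀ : 0 < r₀)
    (hroot : r₀ ^ 3 + r₀ = 2 * m) (rm : ℝ → ℝ)
    (hinv₁ : ∀ r : ℝ, r₀ ≤ r → rm (sm m r₀ r) = r)
    (hinv₂ : ∀ s : ℝ, 0 ≤ s → r₀ ≤ rm s ∧ sm m r₀ (rm s) = s) :
    rm 0 = r₀ ∧
    (∀ s : ℝ, 0 < s →
      HasDerivAt rm (Real.sqrt (1 + (rm s) ^ 2 - 2 * m / rm s)) s ∧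
      0 < Real.sqrt (1 + (rm s) ^ 2 - 2 * m / rm s)) ∧
    (∀ s : ℝ, 0 < s → HasDerivAt (deriv rm) (rm s + m / (rm s) ^ 2) s) ∧
    HasDerivWithinAt rm 0 (Set.Ici 0) 0 := by
  have hinj : InjOn (sm m r₀) (Ici r₀) := LeftInvOn.injOn fun r hr => hinv₁ r hr
  have hsm := sm_strictMonoOn hr₀ hroot hinj
  have hrm0 : rm 0 = r₀ := by simpa [sm_self] using hinv₁ r₀ le_rfl
  have hrm : StrictMonoOn rm (Ici 0) :=
    hsm.strictMonoOn_of_leftInvOn (fun s hs => (hinv₂ s hs).1) (fun s hs => (hinv₂ s hs).2)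
  have himage : rm '' Ici 0 = Ici r₀ := by
    refine (image_subset_iff.2 fun s hs => (hinv₂ s hs).1).antisymm fun r hr => ?_
    exact ⟨sm m r₀ r, sm_self (m := m) ▸ hsm.monotoneOn self_mem_Ici hr hr, hinv₁ r hr⟩
  have hcont := hrm.continuousOn_Ici_of_image_eq himage
  have hgt : ∀ s, 0 < s → r₀ < rm s := fun s hs => hrm0 ▸ hrm self_mem_Ici hs.le hs
  have hpos : ∀ s, 0 < s → 0 < lapseSq m (rm s) := fun s hs => lapseSq_pos hr₀ hroot (hgt s hs)
  have hderiv : ∀ s, 0 < s → HasDerivAt rm (√(lapseSq m (rm s))) s := fun s hs => by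
    simpa using HasDerivAt.of_local_left_inverse (hcont.continuousAt (Ici_mem_nhds hs))
      (hasDerivAt_sm hr₀ hroot hinj (hgt s hs)) (inv_pos.2 (Real.sqrt_pos.2 (hpos s hs))).ne'
      (eventually_gt_nhds hs |>.mono fun u hu => (hinv₂ u hu.le).2)
  refine ⟨hrm0, fun s hs => ⟨hderiv s hs, Real.sqrt_pos.2 (hpos s hs)⟩, fun s hs => ?_,
    hasDerivWithinAt_Ici_of_deriv_eq_sqrt_lapseSq hr₀.ne' hroot
      ((hcont 0 self_mem_Ici).mono Ioi_subset_Ici_self) hrm0 hderiv⟩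
  refine ((hderiv s hs).sqrt_lapseSq_comp (hpos s hs)
    (hr₀.trans (hgt s hs)).ne').congr_of_eventuallyEq ?_
  filter_upwards [Ioi_mem_nhds hs] with u hu using (hderiv u hu).deriv

/-- For every `m > 0`, the inverse function `r_m : [0,∞) → [r₀(m),∞)` of
`s_m` satisfies: `r_m(0) = r₀(m)`; `r_m` is differentiable on `(0,∞)` with
`r_m′(s) = √(1 + r_m(s)² − 2m/r_m(s)) > 0`; `r_m` is twice differentiable on `(0,∞)` with
`r_m″(s) = r_m(s) + m/r_m(s)²`; and the one-sided derivative of `r_m` at `s = 0` exists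
and equals `0`.  Here `r₀` is the unique positive real with `r₀³ + r₀ = 2m`, and the
inverse relationship is expressed by the hypotheses `hinv₁`, `hinv₂`. -/
theorem penrose_stmt8 (m r₀ : ℝ) (hm : 0 < m) (hr₀ : 0 < r₀)
    (hroot : r₀ ^ 3 + r₀ = 2 * m) (rm : ℝ → ℝ)
    (hinv₁ : ∀ r : ℝ, r₀ ≤ r → rm (sm m r₀ r) = r)
    (hinv₂ : ∀ s : ℝ, 0 ≤ s → r₀ ≤ rm s ∧ sm m r₀ (rm s) = s) :
    rm 0 = r₀ ∧
    (∀ s : ℝ, 0 < s →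
      HasDerivAt rm (Real.sqrt (1 + (rm s) ^ 2 - 2 * m / rm s)) s ∧
      0 < Real.sqrt (1 + (rm s) ^ 2 - 2 * m / rm s)) ∧
    (∀ s : ℝ, 0 < s → HasDerivAt (deriv rm) (rm s + m / (rm s) ^ 2) s) ∧
    HasDerivWithinAt rm 0 (Set.Ici 0) 0 :=
  penrose_stmt8_general m r₀ hr₀ hroot rm hinv₁ hinv₂
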